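/- A helix in ℝ³, given by t ↦ (cos t, sin t, c·t) with c ≠ 0, is chiral: its image under reflection in the xy-plane cannot be mapped back onto the original helix by any orientation-preserving isometry of ℝ³ that fixes the helix's axis setwise. Precisely, there is no rotation about the z-axis composed with a translation along the z-axis carrying the set {(cos t, sin t, -c·t) : t ∈ ℝ} onto {(cos t, sin t, c·t) : t ∈ ℝ}. -/

import Mathlib

/-!
A screw motion about the z-axis turns the angle parameter of a helix point by θ and shifts its
height by a. If it carried the left-handed helix into the right-handed one, then along the mirror
helix the height change would have to be -c·t + a = c·(t + θ) modulo 2πc, so 2c·t would be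
constant modulo 2πc. Comparing t = 0 with t = π/2 forces π ∈ 2πℤ, which is absurd.
-/

open Real Set

def helix (c : ℝ) : Set (ℝ × ℝ × ℝ) :=
  {p | ∃ t : ℝ, p = (cos t, sin t, c * t)}

noncomputable def screw (θ a : ℝ) (p : ℝ × ℝ × ℝ) : ℝ × ℝ × ℝ :=
  (p.1 * cos θ - p.2.1 * sin θ, p.1 * sin θ + p.2.1 * cos θ, p.2.2 + a)

theorem screw_apply (θ a t z : ℝ) :
    screw θ a (cos t, sin t, z) = (cos (t + θ), sin (t + θ), z + a) := by
  rw [screw, cos_add, sin_add, add_comm (cos t * sin θ)]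

theorem mem_helix_iff {c s z : ℝ} :
    (cos s, sin s, z) ∈ helix c ↔ ∃ k : ℤ, z = c * (s + k * (2 * π)) := by
  constructor
  · rintro ⟨t, ht⟩
    simp only [Prod.mk.injEq] at ht
    obtain ⟨hcos, hsin, rfl⟩ := ht
    obtain ⟨k, hk⟩ := Angle.angle_eq_iff_two_pi_dvd_sub.1 (Angle.cos_sin_inj hcos.symm hsin.symm)
    exact ⟨k, by rw [show t = s + k * (2 * π) by linarith]⟩
  · rintro ⟨k, rfl⟩
    exact ⟨s + k * (2 * π), by rw [cos_add_int_mul_two_pi, sin_add_int_mul_two_pi]⟩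

theorem not_mapsTo_screw_helix_neg {c : ℝ} (hc : c ≠ 0) (θ a : ℝ) :
    ¬ MapsTo (screw θ a) (helix (-c)) (helix c) := by
  intro h
  have lift (t : ℝ) : ∃ k : ℤ, -c * t + a = c * (t + θ + k * (2 * π)) := by
    rw [← mem_helix_iff, ← screw_apply]
    exact h ⟨t, rfl⟩
  obtain ⟨k₀, hk₀⟩ := lift 0
  obtain ⟨k₁, hk₁⟩ := lift (π / 2)
  have hreal : ((2 * (k₁ - k₀) + 1 : ℤ) : ℝ) * (π * c) = 0 := by
    push_cast
    linear_combination hk₀ - hk₁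
  have hint : 2 * (k₁ - k₀) + 1 = 0 := by
    exact_mod_cast (mul_eq_zero.1 hreal).resolve_right (mul_ne_zero pi_ne_zero hc)
  omega

/-- The right-handed helix `H_c` cannot be obtained from its mirror image `H_{-c}`
by any rotation about the z-axis composed with a translation along the z-axis. -/
theorem helix_chiral (c : ℝ) (hc : c ≠ 0) :
    ¬ ∃ θ a : ℝ,
      (fun p : ℝ × ℝ × ℝ =>
          (p.1 * Real.cos θ - p.2.1 * Real.sin θ,
           p.1 * Real.sin θ + p.2.1 * Real.cos θ,
           p.2.2 + a)) ''
        {p : ℝ × ℝ × ℝ | ∃ t : ℝ, p = (Real.cos t, Real.sin t, -c * t)} =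
      {p : ℝ × ℝ × ℝ | ∃ t : ℝ, p = (Real.cos t, Real.sin t, c * t)} := by
  rintro ⟨θ, a, h⟩
  have hsub : screw θ a '' helix (-c) ⊆ helix c := h.subset
  exact not_mapsTo_screw_helix_neg hc θ a (mapsTo_iff_image_subset.2 hsub)
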